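/- Let w be a word of length n ≥ 2 in which some letter A appears exactly k times. Then f(w) ≥ 2k + 1. -/

import Mathlib

namespace WordGrid

variable {α : Type*}

/-- The `i`-th row of the grid `G` contains the word `w` (forwards or backwards). -/
def rowC {n : ℕ} (w : Fin n → α) (G : Fin n → Fin n → α) (i : Fin n) : Prop :=
  (∀ j, G i j = w j) ∨ (∀ j, G i j = w j.rev)

/-- The `i`-th column of the grid `G` contains the word `w` (forwards or backwards). -/
def colC {n : ℕ} (w : Fin n → α) (G : Fin n → Fin n → α) (i : Fin n) : Prop :=
  (∀ j, G j i = w j) ∨ (∀ j, G j i = w j.rev)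

/-- The main diagonal of the grid `G` contains the word `w`. -/
def diagC {n : ℕ} (w : Fin n → α) (G : Fin n → Fin n → α) : Prop :=
  (∀ j, G j j = w j) ∨ (∀ j, G j j = w j.rev)

/-- The anti-diagonal of the grid `G` contains the word `w`. -/
def adiagC {n : ℕ} (w : Fin n → α) (G : Fin n → Fin n → α) : Prop :=
  (∀ j, G j j.rev = w j) ∨ (∀ j, G j j.rev = w j.rev)

open Classical in
/-- `f(w,G)`: the number of rows, columns and diagonals of `G` containing `w`. -/
noncomputable def count {n : ℕ} (w : Fin n → α) (G : Fin n → Fin n → α) : ℕ :=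
  {i | rowC w G i}.ncard + {i | colC w G i}.ncard
    + (if diagC w G then 1 else 0) + (if adiagC w G then 1 else 0)

/-- `f(w)`: the maximum of `f(w,G)` over all `n`-grids `G`. -/
noncomputable def fword {n : ℕ} (w : Fin n → α) : ℕ :=
  sSup {m | ∃ G : Fin n → Fin n → α, count w G = m}

/-!
Take the grid whose `i`-th row is `w` when `w i = A` and is constantly `w i` otherwise.
Every column `j` with `w j = A` then also reads `w`: its `i`-th cell is `w j = A = w i` or `w i`.
The main diagonal reads `w` as well, which gives `k` rows, `k` columns and one diagonal.
-/

theorem count_le {n : ℕ} (w : Fin n → α) (G : Fin n → Fin n → α) : count w G ≤ 2 * n + 2 := by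
  have hle (S : Set (Fin n)) : S.ncard ≤ n := by
    simpa using Set.ncard_le_ncard (Set.subset_univ S)
  have := hle {i | rowC w G i}
  have := hle {i | colC w G i}
  unfold count
  split_ifs <;> omega

theorem count_le_fword {n : ℕ} (w : Fin n → α) (G : Fin n → Fin n → α) : count w G ≤ fword w :=
  le_csSup ⟨2 * n + 2, Set.forall_mem_range.2 (count_le w)⟩ ⟨G, rfl⟩

section LetterGrid

variable [DecidableEq α] {n : ℕ} (w : Fin n → α) (A : α)

def letterGrid : Fin n → Fin n → α := fun i j => if w i = A then w j else w i

theorem rowC_letterGrid {i : Fin n} (hi : w i = A) : rowC w (letterGrid w A) i :=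
  Or.inl fun _ => if_pos hi

theorem colC_letterGrid {j : Fin n} (hj : w j = A) : colC w (letterGrid w A) j :=
  Or.inl fun i => by by_cases hi : w i = A <;> simp [letterGrid, hi, hj]

theorem diagC_letterGrid : diagC w (letterGrid w A) :=
  Or.inl fun j => by by_cases hj : w j = A <;> simp [letterGrid, hj]

theorem two_mul_ncard_add_one_le_count :
    2 * {i | w i = A}.ncard + 1 ≤ count w (letterGrid w A) := by
  have hrow : {i | w i = A}.ncard ≤ {i | rowC w (letterGrid w A) i}.ncard :=
    Set.ncard_le_ncard (fun _ => rowC_letterGrid w A)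
  have hcol : {i | w i = A}.ncard ≤ {i | colC w (letterGrid w A) i}.ncard :=
    Set.ncard_le_ncard (fun _ => colC_letterGrid w A)
  unfold count
  rw [if_pos (diagC_letterGrid w A)]
  omega

end LetterGrid

theorem fword_many_letter_general {n k : ℕ} (w : Fin n → α)
    (A : α) (hA : {i | w i = A}.ncard = k) :
    fword w ≥ 2 * k + 1 := by
  classical
  subst hA
  exact (two_mul_ncard_add_one_le_count w A).trans (count_le_fword w _)

theorem fword_many_letter {n k : ℕ} (hn : 2 ≤ n) (w : Fin n → α)
    (A : α) (hA : {i | w i = A}.ncard = k) :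
    fword w ≥ 2 * k + 1 :=
  fword_many_letter_general w A hA

end WordGrid
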